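/- In a weak evaluation of a closed term by RKNL (a run using only transitions (1)–(6)), every value occurring in a continue-mode configuration is an annotated lambda abstraction ((λx.t, e)^ℓ), and every stack frame is either an argument frame (□ c) or a memoization frame (ℓ := □). -/

import Mathlib

set_option autoImplicit false
set_option maxHeartbeats 1000000

namespace RKNL

/- Pure lambda terms over a type of variables. -/
inductive Tm (V : Type) : Type
  | var : V → Tm V
  | app : Tm V → Tm V → Tm V
  | lam : V → Tm V → Tm V
  deriving DecidableEq

abbrev Ident : Type := ℕ
abbrev Loc : Type := ℕ

/-- Lookup in an association list (first match). -/
def lookupL {β : Type} : List (ℕ × β) → ℕ → Option β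
  | [], _ => none
  | (a, b) :: l, x => if x = a then some b else lookupL l x

/-- Update of an association list. -/
def updL {β : Type} (l : List (ℕ × β)) (x : ℕ) (b : β) : List (ℕ × β) :=
  l.map fun p => if p.1 = x then (x, b) else p

/-- Environments map identifiers to store locations. -/
abbrev Env : Type := List (Ident × Loc)

/-- Closures pair a term with an environment. -/
abbrev Closure : Type := Tm Ident × Env

/-- Values: terms (normal forms), or abstraction closures annotated with a location. -/
inductive Value : Type
  | tm : Tm Ident → Value
  | abs : Ident → Tm Ident → Env → Loc → Value
  deriving DecidableEq

/-- Storable values (memothunks):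
`pend x t e` is the `todo ⊥` placeholder allocated for the abstraction `(λx.t, e)`,
`todo c` an unevaluated argument thunk, `done v` a memoized value. -/
inductive Storable : Type
  | pend : Ident → Tm Ident → Env → Storable
  | todo : Closure → Storable
  | done : Value → Storable
  deriving DecidableEq

/-- Stores map locations to storable values. -/
abbrev Store : Type := List (Loc × Storable)

/-- Stack frames: `arg c` is `(□ c)`, `appL t` is `(t □)`, `lamF x` is `λx.□`,
`cache ℓ` is `ℓ := □`. -/
inductive Frame : Type
  | arg : Closure → Frame
  | appL : Tm Ident → Frame
  | lamF : Ident → Frame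
  | cache : Loc → Frame
  deriving DecidableEq

abbrev Stack : Type := List Frame

/-- Machine configurations: evaluation mode `⟨c, s, σ⟩▸` and continue mode `⟨σ, v, s⟩◂`. -/
inductive Conf : Type
  | eval : Closure → Stack → Store → Conf
  | cont : Store → Value → Stack → Conf

/-- The initial configuration loading a term. -/
def Conf.init (t : Tm Ident) : Conf := .eval (t, []) [] []

def Conf.store : Conf → Store
  | .eval _ _ σ => σ
  | .cont σ _ _ => σ

def Conf.stack : Conf → Stack
  | .eval _ s _ => s
  | .cont _ _ s => s

/- Identifiers occurring in a configuration (used for freshness of generated names). -/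
def tmVars : Tm Ident → List Ident
  | .var x => [x]
  | .app a b => tmVars a ++ tmVars b
  | .lam x t => x :: tmVars t

def envVars (e : Env) : List Ident := e.map Prod.fst

def valVars : Value → List Ident
  | .tm t => tmVars t
  | .abs x t e _ => x :: (tmVars t ++ envVars e)

def storableVars : Storable → List Ident
  | .pend x t e => x :: (tmVars t ++ envVars e)
  | .todo c => tmVars c.1 ++ envVars c.2
  | .done v => valVars v

def frameVars : Frame → List Ident
  | .arg c => tmVars c.1 ++ envVars c.2
  | .appL t => tmVars t
  | .lamF x => [x]
  | .cache _ => []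

def stackVars (s : Stack) : List Ident := s.foldr (fun f acc => frameVars f ++ acc) []

def storeVars (σ : Store) : List Ident := σ.foldr (fun p acc => storableVars p.2 ++ acc) []

def confVars : Conf → List Ident
  | .eval c s σ => tmVars c.1 ++ envVars c.2 ++ stackVars s ++ storeVars σ
  | .cont σ v s => valVars v ++ stackVars s ++ storeVars σ

/-- The top of the stack is not an argument frame. -/
def Stack.noArgTop : Stack → Prop
  | Frame.arg _ :: _ => False
  | _ => True

/-- The top of the stack is not a memoization frame. -/
def Stack.noCacheTop : Stack → Prop
  | Frame.cache _ :: _ => False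
  | _ => True

/-- The eleven transitions of the RKNL abstract machine, indexed by rule number. -/
inductive Step : ℕ → Conf → Conf → Prop
  | r1 {t1 t2 : Tm Ident} {e : Env} {s : Stack} {σ : Store} :
      Step 1 (.eval (.app t1 t2, e) s σ) (.eval (t1, e) (.arg (t2, e) :: s) σ)
  | r2 {x : Ident} {t : Tm Ident} {e : Env} {s : Stack} {σ : Store} {ℓ : Loc}
      (h : lookupL σ ℓ = none) :
      Step 2 (.eval (.lam x t, e) s σ) (.cont ((ℓ, .pend x t e) :: σ) (.abs x t e ℓ) s)
  | r3 {x : Ident} {e e2 : Env} {s : Stack} {σ : Store} {ℓ : Loc} {t : Tm Ident}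
      (he : lookupL e x = some ℓ) (hσ : lookupL σ ℓ = some (.todo (t, e2))) :
      Step 3 (.eval (.var x, e) s σ) (.eval (t, e2) (.cache ℓ :: s) σ)
  | r4done {x : Ident} {e : Env} {s : Stack} {σ : Store} {ℓ : Loc} {v : Value}
      (he : lookupL e x = some ℓ) (hσ : lookupL σ ℓ = some (.done v)) :
      Step 4 (.eval (.var x, e) s σ) (.cont σ v s)
  | r4free {x : Ident} {e : Env} {s : Stack} {σ : Store}
      (he : lookupL e x = none) :
      Step 4 (.eval (.var x, e) s σ) (.cont σ (.tm (.var x)) s)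
  | r5 {σ : Store} {v : Value} {ℓ : Loc} {s : Stack} :
      Step 5 (.cont σ v (.cache ℓ :: s)) (.cont (updL σ ℓ (.done v)) v s)
  | r6 {σ : Store} {x : Ident} {t t2 : Tm Ident} {e e2 : Env} {ℓ ℓ2 : Loc} {s : Stack}
      (h : lookupL σ ℓ2 = none) :
      Step 6 (.cont σ (.abs x t e ℓ) (.arg (t2, e2) :: s))
             (.eval (t, (x, ℓ2) :: e) s ((ℓ2, .todo (t2, e2)) :: σ))
  | r7 {σ : Store} {x x' x0 : Ident} {t t0 : Tm Ident} {e e0 : Env} {ℓ ℓ2 : Loc} {s : Stack}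
      (hσ : lookupL σ ℓ = some (.pend x0 t0 e0))
      (hs1 : Stack.noArgTop s) (hs2 : Stack.noCacheTop s)
      (hℓ2 : lookupL σ ℓ2 = none)
      (hx' : x' ∉ confVars (.cont σ (.abs x t e ℓ) s)) :
      Step 7 (.cont σ (.abs x t e ℓ) s)
             (.eval (t, (x, ℓ2) :: e) (.lamF x' :: .cache ℓ :: s)
                    ((ℓ2, .done (.tm (.var x'))) :: σ))
  | r8 {σ : Store} {x : Ident} {t : Tm Ident} {e : Env} {ℓ : Loc} {s : Stack} {v : Value}
      (hσ : lookupL σ ℓ = some (.done v))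
      (hs1 : Stack.noArgTop s) (hs2 : Stack.noCacheTop s) :
      Step 8 (.cont σ (.abs x t e ℓ) s) (.cont σ v s)
  | r9 {σ : Store} {t t2 : Tm Ident} {e2 : Env} {s : Stack} :
      Step 9 (.cont σ (.tm t) (.arg (t2, e2) :: s)) (.eval (t2, e2) (.appL t :: s) σ)
  | r10 {σ : Store} {t1 t2 : Tm Ident} {s : Stack} :
      Step 10 (.cont σ (.tm t2) (.appL t1 :: s)) (.cont σ (.tm (.app t1 t2)) s)
  | r11 {σ : Store} {t : Tm Ident} {x : Ident} {s : Stack} :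
      Step 11 (.cont σ (.tm t) (.lamF x :: s)) (.cont σ (.tm (.lam x t)) s)

/-- Reachability by machine transitions. -/
inductive Reach (k0 : Conf) : Conf → Prop
  | refl : Reach k0 k0
  | step {k k' : Conf} {r : ℕ} : Reach k0 k → Step r k k' → Reach k0 k'

/- The lazy Krivine machine KL (Danvy & Zerny), and the translation of weak
RKNL configurations to KL configurations. -/

/-- `x` occurs free in a term. -/
inductive FreeIn (x : Ident) : Tm Ident → Prop
  | var : FreeIn x (.var x)
  | appL {a b : Tm Ident} : FreeIn x a → FreeIn x (.app a b)
  | appR {a b : Tm Ident} : FreeIn x b → FreeIn x (.app a b)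
  | lam {y : Ident} {t : Tm Ident} : x ≠ y → FreeIn x t → FreeIn x (.lam y t)

/-- A closed term. -/
def Closed (t : Tm Ident) : Prop := ∀ x : Ident, ¬ FreeIn x t

/-- KL values are lambda abstractions. -/
def IsLam : Tm Ident → Prop
  | .lam _ _ => True
  | _ => False

/-- KL evaluation contexts, represented inside-out as lists of frames:
`E ::= □ | E t | ⟨x := □⟩E`. -/
inductive KFrame : Type
  | arg : Tm Ident → KFrame
  | cache : Ident → KFrame

abbrev KCtx : Type := List KFrame

/-- KL stores map variables to terms. -/
abbrev KStore : Type := List (Ident × Tm Ident)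

/-- KL configurations. -/
inductive KConf : Type
  | eval : KStore → Tm Ident → KCtx → KConf
  | cont : KStore → Tm Ident → KCtx → KConf

def KConf.init (t : Tm Ident) : KConf := .eval [] t []

/-- Renaming of a free variable: `renameVar x x' t = t{x := x'}` (the renamed
variable `x'` is assumed fresh). -/
def renameVar (x x' : Ident) : Tm Ident → Tm Ident
  | .var y => if y = x then .var x' else .var y
  | .app a b => .app (renameVar x x' a) (renameVar x x' b)
  | .lam y t => if y = x then .lam y t else .lam y (renameVar x x' t)

/-- The six transitions of the KL machine, indexed by rule number. -/
inductive KStep : ℕ → KConf → KConf → Prop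
  | r1 {σ : KStore} {t1 t2 : Tm Ident} {E : KCtx} :
      KStep 1 (.eval σ (.app t1 t2) E) (.eval σ t1 (.arg t2 :: E))
  | r2 {σ : KStore} {x : Ident} {t : Tm Ident} {E : KCtx} :
      KStep 2 (.eval σ (.lam x t) E) (.cont σ (.lam x t) E)
  | r3 {σ : KStore} {x : Ident} {t : Tm Ident} {E : KCtx}
      (h : lookupL σ x = some t) (hnv : ¬ IsLam t) :
      KStep 3 (.eval σ (.var x) E) (.eval σ t (.cache x :: E))
  | r4 {σ : KStore} {x : Ident} {v : Tm Ident} {E : KCtx}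
      (h : lookupL σ x = some v) (hv : IsLam v) :
      KStep 4 (.eval σ (.var x) E) (.cont σ v E)
  | r5 {σ : KStore} {v : Tm Ident} {x : Ident} {E : KCtx} :
      KStep 5 (.cont σ v (.cache x :: E)) (.cont (updL σ x v) v E)
  | r6 {σ : KStore} {x x' : Ident} {t t2 : Tm Ident} {E : KCtx}
      (h : lookupL σ x' = none) :
      KStep 6 (.cont σ (.lam x t) (.arg t2 :: E))
              (.eval ((x', t2) :: σ) (renameVar x x' t) E)

/-- Translation of RKNL closures to KL terms: the environment is applied,
turning store locations into KL variables. -/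
def trC : Tm Ident → Env → Tm Ident
  | .var x, e => .var ((lookupL e x).getD x)
  | .app a b, e => .app (trC a e) (trC b e)
  | .lam x t, e => .lam x (trC t ((x, x) :: e))

/-- Translation of RKNL values. -/
def trV : Value → Tm Ident
  | .tm t => t
  | .abs x t e _ => trC (.lam x t) e

/-- Translation of RKNL stacks to KL contexts (frames `(t □)` and `λx.□` do not
occur in weak evaluations). -/
def trS : Stack → KCtx
  | [] => []
  | .arg (t, e) :: s => .arg (trC t e) :: trS s
  | .cache ℓ :: s => .cache ℓ :: trS s
  | .appL _ :: s => trS s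
  | .lamF _ :: s => trS s

/-- Pointwise translation of RKNL stores (`todo ⊥` placeholders are ignored). -/
def trStore : Store → KStore
  | [] => []
  | (ℓ, .todo (t, e)) :: σ => (ℓ, trC t e) :: trStore σ
  | (ℓ, .done v) :: σ => (ℓ, trV v) :: trStore σ
  | (_, .pend _ _ _) :: σ => trStore σ

/-- Translation of RKNL configurations to KL configurations. -/
def trK : Conf → KConf
  | .eval (t, e) s σ => .eval (trStore σ) (trC t e) (trS s)
  | .cont σ v s => .cont (trStore σ) (trV v) (trS s)

/-- `WeakReach t0 k` : `k` occurs in a weak evaluation of `t0`, i.e. in a run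
from the initial configuration using only transitions (1)–(6). -/
inductive WeakReach (t0 : Tm Ident) : Conf → Prop
  | init : WeakReach t0 (Conf.init t0)
  | step {k k' : Conf} {r : ℕ} :
      WeakReach t0 k → r ≤ 6 → Step r k k' → WeakReach t0 k'


def Scoped (c : Closure) : Prop := ∀ y, FreeIn y c.1 → (lookupL c.2 y).isSome

def Value.IsScopedAbs : Value → Prop
  | .tm _ => False
  | .abs x t e _ => Scoped (.lam x t, e)

def Frame.IsScopedArgOrCache : Frame → Prop
  | .arg c => Scoped c
  | .cache _ => True
  | _ => False

def Storable.IsScoped : Storable → Prop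
  | .pend _ _ _ => True
  | .todo c => Scoped c
  | .done v => v.IsScopedAbs

def Conf.FocusScoped : Conf → Prop
  | .eval c _ _ => Scoped c
  | .cont _ v _ => v.IsScopedAbs

def Conf.WeakInv (k : Conf) : Prop :=
  k.FocusScoped ∧ (∀ f ∈ k.stack, f.IsScopedArgOrCache) ∧ ∀ p ∈ k.store, p.2.IsScoped

lemma Scoped.app_left {a b : Tm Ident} {e : Env} (h : Scoped (.app a b, e)) : Scoped (a, e) :=
  fun y hy => h y (.appL hy)

lemma Scoped.app_right {a b : Tm Ident} {e : Env} (h : Scoped (.app a b, e)) : Scoped (b, e) :=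
  fun y hy => h y (.appR hy)

lemma Scoped.lam_body {x : Ident} {t : Tm Ident} {e : Env} (h : Scoped (.lam x t, e))
    (ℓ : Loc) : Scoped (t, (x, ℓ) :: e) := by
  intro y hy
  by_cases hyx : y = x
  · simp [lookupL, hyx]
  · simpa [lookupL, hyx] using h y (.lam hyx hy)

lemma Scoped.lookupL_var_ne_none {x : Ident} {e : Env} (h : Scoped (.var x, e)) :
    lookupL e x ≠ none :=
  Option.isSome_iff_ne_none.mp (h x .var)

lemma mem_of_lookupL_eq_some {β : Type} {l : List (ℕ × β)} {x : ℕ} {b : β}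
    (h : lookupL l x = some b) : (x, b) ∈ l := by
  induction l with
  | nil => simp [lookupL] at h
  | cons p l ih =>
    by_cases hx : x = p.1
    · simp only [lookupL, hx, if_true, Option.some.injEq] at h
      simp [← h, hx]
    · simp only [lookupL, hx, if_false] at h
      exact List.mem_cons_of_mem _ (ih h)

lemma mem_updL {β : Type} {l : List (ℕ × β)} {x : ℕ} {b : β} {p : ℕ × β}
    (h : p ∈ updL l x b) : p = (x, b) ∨ p ∈ l := by
  obtain ⟨q, hq, rfl⟩ := List.mem_map.mp h
  split
  · exact .inl rfl
  · exact .inr hq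

lemma Conf.WeakInv.init {t : Tm Ident} (ht : Closed t) : (Conf.init t).WeakInv :=
  ⟨fun y hy => absurd hy (ht y), by simp [Conf.init, Conf.stack],
    by simp [Conf.init, Conf.store]⟩

lemma Conf.WeakInv.step {r : ℕ} {k k' : Conf} (hr : r ≤ 6) (hs : Step r k k')
    (hk : k.WeakInv) : k'.WeakInv := by
  obtain ⟨hfocus, hstack, hstore⟩ := hk
  cases hs with
  | r1 =>
    exact ⟨hfocus.app_left, List.forall_mem_cons.mpr ⟨hfocus.app_right, hstack⟩, hstore⟩
  | r2 =>
    exact ⟨hfocus, hstack, List.forall_mem_cons.mpr ⟨trivial, hstore⟩⟩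
  | r3 _ hlookup =>
    exact ⟨hstore _ (mem_of_lookupL_eq_some hlookup), List.forall_mem_cons.mpr ⟨trivial, hstack⟩,
      hstore⟩
  | r4done _ hlookup => exact ⟨hstore _ (mem_of_lookupL_eq_some hlookup), hstack, hstore⟩
  | r4free hfree => exact absurd hfree hfocus.lookupL_var_ne_none
  | r5 =>
    refine ⟨hfocus, (List.forall_mem_cons.mp hstack).2, fun p hp => ?_⟩
    rcases mem_updL hp with rfl | hp
    exacts [hfocus, hstore p hp]
  | r6 =>
    obtain ⟨harg, hstack⟩ := List.forall_mem_cons.mp hstack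
    exact ⟨hfocus.lam_body _, hstack, List.forall_mem_cons.mpr ⟨harg, hstore⟩⟩
  | r7 | r8 | r9 | r10 | r11 => omega

lemma WeakReach.weakInv {t0 : Tm Ident} {k : Conf} (h0 : Closed t0) (h : WeakReach t0 k) :
    k.WeakInv := by
  induction h with
  | init => exact .init h0
  | step _ hr hs ih => exact ih.step hr hs

lemma Value.IsScopedAbs.exists_eq_abs {v : Value} (hv : v.IsScopedAbs) :
    ∃ (x : Ident) (t : Tm Ident) (e : Env) (ℓ : Loc), v = .abs x t e ℓ := by
  cases v with
  | tm _ => exact hv.elim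
  | abs x t e ℓ => exact ⟨x, t, e, ℓ, rfl⟩

lemma Frame.IsScopedArgOrCache.exists_eq {f : Frame} (hf : f.IsScopedArgOrCache) :
    (∃ c : Closure, f = .arg c) ∨ ∃ ℓ : Loc, f = .cache ℓ := by
  cases f with
  | arg c => exact .inl ⟨c, rfl⟩
  | cache ℓ => exact .inr ⟨ℓ, rfl⟩
  | appL _ | lamF _ => exact hf.elim

/-- In a weak evaluation of a closed term by RKNL, every value occurring in a
continue-mode configuration is an annotated lambda abstraction, and every stack
frame is either an argument frame or a memoization frame. -/
theorem weak_evaluation_shape {t0 : Tm Ident} {k : Conf}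
    (h0 : Closed t0) (h : WeakReach t0 k) :
    (∀ (σ : Store) (v : Value) (s : Stack),
        k = .cont σ v s →
        ∃ (x : Ident) (t : Tm Ident) (e : Env) (ℓ : Loc), v = .abs x t e ℓ) ∧
    (∀ f : Frame, f ∈ k.stack →
        (∃ c : Closure, f = .arg c) ∨ ∃ ℓ : Loc, f = .cache ℓ) := by
  obtain ⟨hfocus, hstack, -⟩ := h.weakInv h0
  refine ⟨?_, fun f hf => (hstack f hf).exists_eq⟩
  rintro σ v s rfl
  exact Value.IsScopedAbs.exists_eq_abs hfocus

end RKNL
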